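/- arXiv:1402.5165 — 2 statements merged into one kernel-verified Lean document; each statement's English description precedes it below -/
import Mathlib

section
/- Let S be a correlated-strategies solution of finite games. If S satisfies Strategic Equivalence (SE) and Pure Individual Rationality (PIR), then for every game u, every element of S(u) is a coarse-correlated equilibrium of u, i.e. S(u) ⊆ CCE(u). -/
open scoped Classical

noncomputable section

/-- A finite normal-form game on action sets `A i`: a payoff function for each player. -/
abbrev Game {n : ℕ} (A : Fin n → Type*) : Type _ :=
  Fin n → (∀ j, A j) → ℝ

/-- Opponents' action profiles of player `i`. -/
abbrev Opp {n : ℕ} (A : Fin n → Type*) (i : Fin n) : Type _ :=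
  ∀ j : {j : Fin n // j ≠ i}, A j.1

/-- The game `z(c, i, b₋ᵢ)`: player `i` receives payoff `c` at every profile whose
opponents' component equals `b`, and `0` otherwise; all other players always get `0`. -/
def zGame {n : ℕ} {A : Fin n → Type*} (c : ℝ) (i : Fin n) (b : Opp A i) : Game A :=
  fun j a => if j = i ∧ (∀ k : {k : Fin n // k ≠ i}, a k.1 = b k) then c else 0

/-- The full action profile obtained from own action `ai` of player `i` and an
opponents' profile `b`. -/
def merge {n : ℕ} {A : Fin n → Type*} (i : Fin n) (ai : A i) (b : Opp A i) : ∀ j, A j :=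
  fun j => if h : j = i then cast (congrArg A h.symm) ai else b ⟨j, h⟩

/-- The pure individually rational value of player `i`:
`pir_i(u) = max_{a_i} min_{a_{-i}} u_i(a_i, a_{-i})`. -/
def pir {n : ℕ} {A : Fin n → Type*} (u : Game A) (i : Fin n) : ℝ :=
  ⨆ ai : A i, ⨅ b : Opp A i, u i (merge i ai b)

/-- `a` is a pure Nash equilibrium of `u`. -/
def IsPNE {n : ℕ} {A : Fin n → Type*} (u : Game A) (a : ∀ j, A j) : Prop :=
  ∀ (i : Fin n) (bi : A i), u i (Function.update a i bi) ≤ u i a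

/-- A correlated strategy: a probability distribution on the set `A` of action profiles. -/
abbrev CorrDist {n : ℕ} (A : Fin n → Type*) [∀ i, Fintype (A i)] : Type _ :=
  {x : (∀ j, A j) → ℝ // (∀ a, 0 ≤ x a) ∧ ∑ a, x a = 1}

/-!
Subtracting `u i (bᵢ, a₋ᵢ)` from player `i`'s payoff changes it only by a function of the
opponents' actions, i.e. by a finite sum of games `zGame`, so by SE the solution is unchanged.
In the new game player `i` guarantees `0` by playing `bᵢ`, so PIR says that the expected payoff
`E_x[u i a - u i (bᵢ, a₋ᵢ)]` is nonnegative, which is the coarse-correlated inequality for `bᵢ`.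
-/

section
variable {n : ℕ} {A : Fin n → Type*}

def oppProfile (i : Fin n) (a : ∀ j, A j) : Opp A i := fun k => a k.1

lemma zGame_apply_self (c : ℝ) (i : Fin n) (b : Opp A i) (a : ∀ j, A j) :
    zGame c i b i a = if oppProfile i a = b then c else 0 := by
  simp [zGame, oppProfile, funext_iff]

lemma merge_oppProfile (i : Fin n) (bi : A i) (a : ∀ j, A j) :
    merge i bi (oppProfile i a) = Function.update a i bi := by
  funext j
  by_cases h : j = i
  · subst h; simp [merge]
  · simp [merge, oppProfile, h]

lemma update_merge_self (i : Fin n) (bi : A i) (b : Opp A i) :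
    Function.update (merge i bi b) i bi = merge i bi b :=
  Function.update_eq_self_iff.2 (by simp [merge])

lemma iInf_merge_le_pir (u : Game A) (i : Fin n) [Finite (A i)] (ai : A i) :
    ⨅ b : Opp A i, u i (merge i ai b) ≤ pir u i :=
  le_ciSup (f := fun ai => ⨅ b : Opp A i, u i (merge i ai b)) (Finite.bddAbove_range _) ai

variable [∀ i, Fintype (A i)]

lemma eq_add_sum_zGame_of_strategicEquivalence {S : Game A → Set (CorrDist A)}
    (SE : ∀ (u : Game A) (c : ℝ) (i : Fin n) (b : Opp A i), S u = S (u + zGame c i b))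
    (u : Game A) (i : Fin n) (c : Opp A i → ℝ) (s : Finset (Opp A i)) :
    S (u + ∑ b ∈ s, zGame (c b) i b) = S u := by
  induction s using Finset.induction with
  | empty => simp
  | insert b s hbs ih =>
    rw [Finset.sum_insert hbs, add_comm (zGame _ i _), ← add_assoc, ← SE, ih]

def deviationGain (u : Game A) (i : Fin n) (bi : A i) : Game A :=
  u + ∑ b : Opp A i, zGame (-u i (merge i bi b)) i b

lemma deviationGain_apply_self (u : Game A) (i : Fin n) (bi : A i) (a : ∀ j, A j) :
    deviationGain u i bi i a = u i a - u i (Function.update a i bi) := by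
  simp only [deviationGain, Pi.add_apply, Finset.sum_apply, zGame_apply_self,
    Finset.sum_ite_eq, Finset.mem_univ, if_true, merge_oppProfile]
  ring

lemma pir_deviationGain_nonneg (u : Game A) (i : Fin n) (bi : A i) :
    0 ≤ pir (deviationGain u i bi) i := by
  have hzero : ∀ b : Opp A i, deviationGain u i bi i (merge i bi b) = 0 := fun b => by
    rw [deviationGain_apply_self, update_merge_self, sub_self]
  simpa only [hzero, Real.iInf_const_zero] using iInf_merge_le_pir (deviationGain u i bi) i bi

end

theorem statement2_general {n : ℕ} (A : Fin n → Type*)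
    [∀ i, Fintype (A i)]
    (S : Game A → Set (CorrDist A))
    (SE : ∀ (u : Game A) (c : ℝ) (i : Fin n) (b : Opp A i), S u = S (u + zGame c i b))
    (PIR : ∀ u : Game A, ∀ x ∈ S u, ∀ i : Fin n, ∑ a, x.1 a * u i a ≥ pir u i) :
    ∀ u : Game A, ∀ x ∈ S u, ∀ (i : Fin n) (bi : A i),
      ∑ a, x.1 a * u i a ≥ ∑ a, x.1 a * u i (Function.update a i bi) := by
  intro u x hx i bi
  have hx' : x ∈ S (deviationGain u i bi) := by
    rwa [deviationGain, eq_add_sum_zGame_of_strategicEquivalence SE]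
  have hgain := (pir_deviationGain_nonneg u i bi).trans (PIR _ x hx' i)
  simp only [deviationGain_apply_self, mul_sub, Finset.sum_sub_distrib] at hgain
  linarith

/-- Any correlated-strategies solution satisfying Strategic Equivalence (SE) and
Pure Individual Rationality (PIR) only outputs coarse-correlated equilibria. -/
theorem statement2 {n : ℕ} (hn : 0 < n) (A : Fin n → Type*)
    [∀ i, Fintype (A i)] [∀ i, Nonempty (A i)]
    (S : Game A → Set (CorrDist A))
    (SE : ∀ (u : Game A) (c : ℝ) (i : Fin n) (b : Opp A i), S u = S (u + zGame c i b))
    (PIR : ∀ u : Game A, ∀ x ∈ S u, ∀ i : Fin n, ∑ a, x.1 a * u i a ≥ pir u i) :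
    ∀ u : Game A, ∀ x ∈ S u, ∀ (i : Fin n) (bi : A i),
      ∑ a, x.1 a * u i a ≥ ∑ a, x.1 a * u i (Function.update a i bi) :=
  statement2_general A S SE PIR
end
end

section
/- Let S be a pure-strategies solution of continuous convex games on compact convex action sets. If S satisfies Continuous Strategic Equivalence (CSE), Pure Individual Rationality (PIR), and the Simultaneous Maximizer axiom (SM), then S coincides with pure Nash equilibrium: S(u) = PNE(u) for every continuous convex game u. -/
open scoped Classical

noncomputable section

variable {n : ℕ} {E : Fin n → Type*}
  [∀ i, NormedAddCommGroup (E i)] [∀ i, NormedSpace ℝ (E i)]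

/-- Action profiles: one action from each player's action set `A i`. -/
abbrev CProfile (A : ∀ i, Set (E i)) : Type _ := ∀ j, ↥(A j)

/-- A game with action sets `A i`: a payoff function for each player. -/
abbrev CGame (A : ∀ i, Set (E i)) : Type _ := Fin n → CProfile A → ℝ

/-- Opponents' action profiles of player `i`. -/
abbrev COpp (A : ∀ i, Set (E i)) (i : Fin n) : Type _ :=
  ∀ j : {j : Fin n // j ≠ i}, ↥(A j.1)

/-- The game `z(i, f)`: player `i` receives payoff `f(a₋ᵢ)` at every profile `a`
(irrespective of his own action); every other player always gets `0`. -/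
def zC (A : ∀ i, Set (E i)) (i : Fin n) (f : COpp A i → ℝ) : CGame A :=
  fun j a => if j = i then f (fun k => a k.1) else 0

/-- The full profile obtained from own action `ai` of player `i` and an opponents'
profile `b`. -/
def mergeC (A : ∀ i, Set (E i)) (i : Fin n) (ai : ↥(A i)) (b : COpp A i) :
    CProfile A :=
  fun j => if h : j = i then cast (congrArg (fun t => ↥(A t)) h.symm) ai else b ⟨j, h⟩

/-- The pure individually rational value of player `i`:
`pir_i(u) = max_{a_i} min_{a_{-i}} u_i(a_i, a_{-i})`. -/
def pirC (A : ∀ i, Set (E i)) (u : CGame A) (i : Fin n) : ℝ :=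
  ⨆ ai : ↥(A i), ⨅ b : COpp A i, u i (mergeC A i ai b)

/-- A continuous convex game: each payoff function is continuous, and each player's
payoff is a convex function of his own action (for every fixed opponents' profile). -/
def IsCCGame (A : ∀ i, Set (E i)) (hconv : ∀ i, Convex ℝ (A i)) (u : CGame A) : Prop :=
  (∀ i, Continuous (u i)) ∧
  ∀ (i : Fin n) (a : CProfile A) (x y : ↥(A i)) (s t : ℝ)
    (hs : 0 ≤ s) (ht : 0 ≤ t) (hst : s + t = 1),
    u i (Function.update a i ⟨s • (x : E i) + t • (y : E i),
        hconv i x.2 y.2 hs ht hst⟩) ≤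
      s * u i (Function.update a i x) + t * u i (Function.update a i y)

/-- `a` is a pure Nash equilibrium of `u`. -/
def IsPNEc (A : ∀ i, Set (E i)) (u : CGame A) (a : CProfile A) : Prop :=
  ∀ (i : Fin n) (bi : ↥(A i)), u i (Function.update a i bi) ≤ u i a

/-- `a` is a strict pure Nash equilibrium of `u`. -/
def IsStrictPNEc (A : ∀ i, Set (E i)) (u : CGame A) (a : CProfile A) : Prop :=
  ∀ (i : Fin n) (bi : ↥(A i)), bi ≠ a i → u i (Function.update a i bi) < u i a

/-!
By CSE, player `i` may be given any extra continuous payoff that depends only on the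
opponents' actions without changing the solution; both inclusions come from choosing it well.

If `x ∈ S u` and `c` is a deviation of player `i`, give him the extra payoff
`u_i(c, x₋ᵢ) - u_i(c, b)` at opponents' profile `b`. In the new game action `c` guarantees him
`u_i(c, x₋ᵢ)` whatever the opponents do, while his payoff at `x` is unchanged, so PIR yields
`u_i(x) ≥ u_i(c, x₋ᵢ)`.

If `a` is a Nash equilibrium, subtract from every player `j` his best-reply value
`max_c u_j(c, b)` against `b`. Every payoff of the new game is `≤ 0`, with equality at `a`, so
`a` is a simultaneous maximizer and SM puts it into the solution.
-/

set_option linter.unusedSectionVars false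

variable {A : ∀ i, Set (E i)}

/-- The opponents' part `a₋ᵢ` of a profile `a`. -/
def restC (i : Fin n) (a : CProfile A) : COpp A i := fun k => a k.1

@[simp]
lemma mergeC_self (i : Fin n) (ai : ↥(A i)) (b : COpp A i) : mergeC A i ai b i = ai := by
  simp [mergeC]

lemma mergeC_of_ne (i : Fin n) (ai : ↥(A i)) (b : COpp A i) {j : Fin n} (h : j ≠ i) :
    mergeC A i ai b j = b ⟨j, h⟩ := by
  simp [mergeC, h]

@[simp]
lemma restC_mergeC (i : Fin n) (ai : ↥(A i)) (b : COpp A i) : restC i (mergeC A i ai b) = b :=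
  funext fun k => mergeC_of_ne i ai b k.2

lemma mergeC_restC (i : Fin n) (a : CProfile A) : mergeC A i (a i) (restC i a) = a := by
  funext j
  by_cases h : j = i
  · subst h; simp
  · simp [mergeC_of_ne _ _ _ h, restC]

lemma update_eq_mergeC (i : Fin n) (a : CProfile A) (ai : ↥(A i)) :
    Function.update a i ai = mergeC A i ai (restC i a) := by
  funext j
  by_cases h : j = i
  · subst h; simp
  · simp [mergeC_of_ne _ _ _ h, restC, h]

@[simp]
lemma restC_update (i : Fin n) (a : CProfile A) (ai : ↥(A i)) :
    restC i (Function.update a i ai) = restC i a :=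
  funext fun k => Function.update_of_ne k.2 _ _

lemma continuous_restC (i : Fin n) : Continuous (restC (A := A) i) :=
  continuous_pi fun k => continuous_apply k.1

lemma continuous_mergeC (i : Fin n) :
    Continuous fun p : ↥(A i) × COpp A i => mergeC A i p.1 p.2 := by
  refine continuous_pi fun j => ?_
  by_cases h : j = i
  · subst h
    simpa using continuous_fst
  · have hj : (fun p : ↥(A i) × COpp A i => mergeC A i p.1 p.2 j) = fun p => p.2 ⟨j, h⟩ :=
      funext fun p => mergeC_of_ne i p.1 p.2 h
    rw [hj]
    exact (continuous_apply _).comp continuous_snd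

lemma zC_apply_self (i : Fin n) (f : COpp A i → ℝ) (a : CProfile A) :
    zC A i f i a = f (restC i a) :=
  if_pos rfl

lemma zC_apply_of_ne (i : Fin n) (f : COpp A i → ℝ) {j : Fin n} (h : j ≠ i) (a : CProfile A) :
    zC A i f j a = 0 := by
  simp [zC, h]

lemma sum_zC_apply (f : ∀ i, COpp A i → ℝ) (i : Fin n) (a : CProfile A) :
    (∑ j, zC A j (f j)) i a = f i (restC i a) := by
  rw [Finset.sum_apply, Finset.sum_apply, Finset.sum_eq_single i (by
    intro j _ hj; exact zC_apply_of_ne j _ (Ne.symm hj) a) (by simp)]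
  exact zC_apply_self i _ a

lemma zC_update (i j : Fin n) (f : COpp A i → ℝ) (a : CProfile A) (aj : ↥(A j)) :
    zC A i f j (Function.update a j aj) = zC A i f j a := by
  by_cases h : j = i
  · subst h
    rw [zC_apply_self, zC_apply_self, restC_update]
  · rw [zC_apply_of_ne i f h, zC_apply_of_ne i f h]

lemma IsCCGame.add_zC {hconv : ∀ i, Convex ℝ (A i)} {u : CGame A} (hu : IsCCGame A hconv u)
    (i : Fin n) {f : COpp A i → ℝ} (hf : Continuous f) : IsCCGame A hconv (u + zC A i f) := by
  refine ⟨fun j => (hu.1 j).add ?_, fun j a x y s t hs ht hst => ?_⟩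
  · by_cases h : j = i
    · subst h
      rw [show zC A j f j = f ∘ restC j from funext (zC_apply_self j f)]
      exact hf.comp (continuous_restC j)
    · rw [show zC A i f j = fun _ => 0 from funext (zC_apply_of_ne i f h)]
      exact continuous_const
  · have hconst : s * zC A i f j a + t * zC A i f j a = zC A i f j a := by
      rw [← add_mul, hst, one_mul]
    simp only [Pi.add_apply, zC_update]
    linarith [hu.2 j a x y s t hs ht hst]

lemma IsCCGame.add_sum_zC {hconv : ∀ i, Convex ℝ (A i)} {u : CGame A}
    (hu : IsCCGame A hconv u) {f : ∀ i, COpp A i → ℝ} (hf : ∀ i, Continuous (f i))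
    (t : Finset (Fin n)) : IsCCGame A hconv (u + ∑ j ∈ t, zC A j (f j)) := by
  induction t using Finset.induction_on with
  | empty => simpa using hu
  | insert j t hjt ih =>
    rw [Finset.sum_insert hjt, add_left_comm, add_comm]
    exact ih.add_zC j (hf j)

section Axioms

variable (A) (hconv : ∀ i, Convex ℝ (A i)) (S : CGame A → Set (CProfile A))

def ContStrategicEquivalence : Prop :=
  ∀ u : CGame A, IsCCGame A hconv u →
    ∀ (i : Fin n) (f : COpp A i → ℝ), Continuous f → S u = S (u + zC A i f)

def PureIndividuallyRational : Prop :=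
  ∀ u : CGame A, IsCCGame A hconv u → ∀ x ∈ S u, ∀ i : Fin n, u i x ≥ pirC A u i

def SimultaneousMaximizer : Prop :=
  ∀ u : CGame A, IsCCGame A hconv u → ∀ a : CProfile A,
    (∀ (i : Fin n) (b : CProfile A), u i a ≥ u i b) → a ∈ S u

end Axioms

lemma ContStrategicEquivalence.eq_add_sum_zC {hconv : ∀ i, Convex ℝ (A i)}
    {S : CGame A → Set (CProfile A)} (hS : ContStrategicEquivalence A hconv S) {u : CGame A}
    (hu : IsCCGame A hconv u) {f : ∀ i, COpp A i → ℝ} (hf : ∀ i, Continuous (f i))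
    (t : Finset (Fin n)) : S u = S (u + ∑ j ∈ t, zC A j (f j)) := by
  induction t using Finset.induction_on with
  | empty => simp
  | insert j t hjt ih =>
    rw [Finset.sum_insert hjt, add_left_comm, add_comm, ih]
    exact hS _ (hu.add_sum_zC hf t) j (f j) (hf j)

section Compact

variable [∀ i, CompactSpace ↥(A i)]

lemma bddAbove_range_comp {g : CProfile A → ℝ} (hg : Continuous g) {α : Type*}
    (p : α → CProfile A) : BddAbove (Set.range (g ∘ p)) :=
  (isCompact_range hg).bddAbove.mono (Set.range_comp_subset_range p g)

lemma bddBelow_range_comp {g : CProfile A → ℝ} (hg : Continuous g) {α : Type*}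
    (p : α → CProfile A) : BddBelow (Set.range (g ∘ p)) :=
  (isCompact_range hg).bddBelow.mono (Set.range_comp_subset_range p g)

lemma continuous_iSup_mergeC (i : Fin n) {g : CProfile A → ℝ} (hg : Continuous g) :
    Continuous fun b : COpp A i => ⨆ c : ↥(A i), g (mergeC A i c b) := by
  have h := isCompact_univ.continuous_sSup (K := (Set.univ : Set ↥(A i)))
    (f := fun (b : COpp A i) (c : ↥(A i)) => g (mergeC A i c b))
    (hg.comp ((continuous_mergeC i).comp continuous_swap))
  simpa only [Set.image_univ, sSup_range] using h

lemma le_iSup_mergeC_restC (i : Fin n) {g : CProfile A → ℝ} (hg : Continuous g)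
    (a : CProfile A) : g a ≤ ⨆ c : ↥(A i), g (mergeC A i c (restC i a)) := by
  conv_lhs => rw [← mergeC_restC i a]
  exact le_ciSup (bddAbove_range_comp hg (fun c => mergeC A i c (restC i a))) (a i)

lemma le_pirC (i : Fin n) [Nonempty (COpp A i)] {u : CGame A} (hu : Continuous (u i)) {r : ℝ}
    (ai : ↥(A i)) (h : ∀ b, r ≤ u i (mergeC A i ai b)) : r ≤ pirC A u i := by
  unfold pirC
  obtain ⟨b₀⟩ := ‹Nonempty (COpp A i)›
  obtain ⟨C, hC⟩ := (isCompact_range hu).bddAbove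
  refine (le_ciInf h).trans (le_ciSup (f := fun ai => ⨅ b, u i (mergeC A i ai b)) ⟨C, ?_⟩ ai)
  rintro _ ⟨c, rfl⟩
  exact (ciInf_le (bddBelow_range_comp hu _) b₀).trans (hC ⟨_, rfl⟩)

variable {hconv : ∀ i, Convex ℝ (A i)} {S : CGame A → Set (CProfile A)}
  {u : CGame A}

lemma isPNEc_of_mem_solution (hCSE : ContStrategicEquivalence A hconv S)
    (hPIR : PureIndividuallyRational A hconv S) (hu : IsCCGame A hconv u) {x : CProfile A}
    (hx : x ∈ S u) : IsPNEc A u x := by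
  intro i c
  have : Nonempty (COpp A i) := ⟨restC i x⟩
  set f : COpp A i → ℝ := fun b => u i (mergeC A i c (restC i x)) - u i (mergeC A i c b)
  have hf : Continuous f := continuous_const.sub
    ((hu.1 i).comp ((continuous_mergeC i).comp (continuous_const.prodMk continuous_id)))
  have hu' := hu.add_zC i hf
  have hguarantee : u i (Function.update x i c) ≤ pirC A (u + zC A i f) i := by
    rw [update_eq_mergeC]
    refine le_pirC i (hu'.1 i) c fun b => ?_
    simp [zC_apply_self, f]
  calc u i (Function.update x i c) ≤ pirC A (u + zC A i f) i := hguarantee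
    _ ≤ (u + zC A i f) i x := hPIR _ hu' x (hCSE u hu i f hf ▸ hx) i
    _ = u i x := by simp [zC_apply_self, f]

lemma mem_solution_of_isPNEc (hCSE : ContStrategicEquivalence A hconv S)
    (hSM : SimultaneousMaximizer A hconv S) (hu : IsCCGame A hconv u) {a : CProfile A}
    (ha : IsPNEc A u a) : a ∈ S u := by
  set f : ∀ j, COpp A j → ℝ := fun j b => -⨆ c : ↥(A j), u j (mergeC A j c b)
  have hf : ∀ j, Continuous (f j) := fun j => (continuous_iSup_mergeC j (hu.1 j)).neg
  rw [hCSE.eq_add_sum_zC hu hf Finset.univ]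
  refine hSM _ (hu.add_sum_zC hf _) a fun j b => ?_
  have hval : ∀ p, (u + ∑ k, zC A k (f k)) j p =
      u j p - ⨆ c : ↥(A j), u j (mergeC A j c (restC j p)) := fun p => by
    rw [Pi.add_apply, Pi.add_apply, sum_zC_apply, sub_eq_add_neg]
  have : Nonempty ↥(A j) := ⟨a j⟩
  have hbest : ⨆ c : ↥(A j), u j (mergeC A j c (restC j a)) ≤ u j a :=
    ciSup_le fun c => update_eq_mergeC j a c ▸ ha j c
  rw [ge_iff_le, hval, hval]
  linarith [le_iSup_mergeC_restC j (hu.1 j) b]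

end Compact

theorem statement16_general {n : ℕ} {E : Fin n → Type*}
    [∀ i, NormedAddCommGroup (E i)] [∀ i, NormedSpace ℝ (E i)]
    (A : ∀ i, Set (E i)) (hA : ∀ i, IsCompact (A i)) (hconv : ∀ i, Convex ℝ (A i))
    (S : CGame A → Set (CProfile A))
    (CSE : ∀ u : CGame A, IsCCGame A hconv u →
      ∀ (i : Fin n) (f : COpp A i → ℝ), Continuous f → S u = S (u + zC A i f))
    (PIR : ∀ u : CGame A, IsCCGame A hconv u →
      ∀ x ∈ S u, ∀ i : Fin n, u i x ≥ pirC A u i)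
    (SM : ∀ u : CGame A, IsCCGame A hconv u → ∀ a : CProfile A,
      (∀ (i : Fin n) (b : CProfile A), u i a ≥ u i b) → a ∈ S u) :
    ∀ u : CGame A, IsCCGame A hconv u → S u = {a | IsPNEc A u a} := by
  intro u hu
  have : ∀ i, CompactSpace ↥(A i) := fun i => isCompact_iff_compactSpace.mp (hA i)
  exact Set.Subset.antisymm (fun x hx => isPNEc_of_mem_solution CSE PIR hu hx)
    (fun a ha => mem_solution_of_isPNEc CSE SM hu ha)

/-- A pure-strategies solution of continuous convex games satisfying Continuous
Strategic Equivalence (CSE), Pure Individual Rationality (PIR), and the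
Simultaneous Maximizer axiom (SM) coincides with the pure Nash equilibrium
correspondence. -/
theorem statement16 {n : ℕ} (hn : 0 < n) {E : Fin n → Type*}
    [∀ i, NormedAddCommGroup (E i)] [∀ i, NormedSpace ℝ (E i)]
    (A : ∀ i, Set (E i)) (hA : ∀ i, IsCompact (A i)) (hconv : ∀ i, Convex ℝ (A i))
    (hne : ∀ i, (A i).Nonempty)
    (S : CGame A → Set (CProfile A))
    (CSE : ∀ u : CGame A, IsCCGame A hconv u →
      ∀ (i : Fin n) (f : COpp A i → ℝ), Continuous f → S u = S (u + zC A i f))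
    (PIR : ∀ u : CGame A, IsCCGame A hconv u →
      ∀ x ∈ S u, ∀ i : Fin n, u i x ≥ pirC A u i)
    (SM : ∀ u : CGame A, IsCCGame A hconv u → ∀ a : CProfile A,
      (∀ (i : Fin n) (b : CProfile A), u i a ≥ u i b) → a ∈ S u) :
    ∀ u : CGame A, IsCCGame A hconv u → S u = {a | IsPNEc A u a} :=
  statement16_general A hA hconv S CSE PIR SM
end
end
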